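/- For all natural numbers n and m, the quantity A(n,m) = 2·(2m+3)!·(4n+2m+1)! / ((m+2)!·m!·n!·(3n+2m+3)!) is a positive integer, i.e. the denominator (m+2)!·m!·n!·(3n+2m+3)! divides 2·(2m+3)!·(4n+2m+1)!. -/

import Mathlib

/-!
Writing `N = 4n + 2m + 1` and `b = 3n + 2m + 1`, so that `N = n + b`, Brown's number is the integer
combination of binomial coefficients
`A(n,m) = C(m+1)·(N choose b) - (C(m+2) + 2C(m+1))·(N choose b+1) + 3(C(m+2) - C(m+1))·(N choose b+2)`
of Catalan numbers `C`. Indeed, multiplying `N choose b+k` by `n!·(b+2)!` gives `N!` times a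
polynomial in `n` (`(b+1)(b+2)`, `n(b+2)`, `n(n-1)` for `k = 0, 1, 2`), and in the resulting
combination the terms in `n` cancel by the Catalan recurrence `(m+3)·C(m+2) = 2(2m+3)·C(m+1)`.
-/

open Nat

theorem Nat.add_choose_add_mul_factorial_mul_factorial (a b k : ℕ) :
    (a + b).choose (b + k) * a ! * (b + k)! = a.descFactorial k * (a + b)! := by
  rcases lt_or_ge a k with h | h
  · rw [choose_eq_zero_of_lt (by omega), descFactorial_eq_zero_iff_lt.mpr h]
    simp
  · obtain ⟨c, rfl⟩ := Nat.exists_eq_add_of_le' h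
    have hdesc := factorial_mul_descFactorial h
    rw [Nat.add_sub_cancel] at hdesc
    rw [← hdesc, show c + k + b = c + (b + k) by omega,
      ← add_choose_mul_factorial_mul_factorial c (b + k)]
    ring

theorem catalan_mul_factorial_mul_factorial (k : ℕ) :
    catalan k * (k + 1)! * k ! = (2 * k)! := by
  rw [factorial_succ, two_mul, ← add_choose_mul_factorial_mul_factorial, ← two_mul,
    ← centralBinom_eq_two_mul_choose, ← succ_mul_catalan_eq_centralBinom]
  ring

theorem succ_succ_mul_catalan_succ (k : ℕ) :
    (k + 2) * catalan (k + 1) = 2 * (2 * k + 1) * catalan k := by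
  have h := succ_mul_centralBinom_succ k
  rw [← succ_mul_catalan_eq_centralBinom, ← succ_mul_catalan_eq_centralBinom] at h
  apply Nat.eq_of_mul_eq_mul_left (show 0 < k + 1 by omega)
  linear_combination h

def brownQuotient (n m : ℕ) : ℤ :=
  catalan (m + 1) * (4 * n + 2 * m + 1).choose (3 * n + 2 * m + 1)
    - (catalan (m + 2) + 2 * catalan (m + 1)) * (4 * n + 2 * m + 1).choose (3 * n + 2 * m + 2)
    + 3 * (catalan (m + 2) - catalan (m + 1)) * (4 * n + 2 * m + 1).choose (3 * n + 2 * m + 3)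

theorem factorial_mul_factorial_mul_brown_catalan_combination {n m b : ℕ}
    (hb : b = 3 * n + 2 * m + 1) :
    ((m + 2)! * m ! : ℤ) * (catalan (m + 1) * ((b + 1) * (b + 2))
      - (catalan (m + 2) + 2 * catalan (m + 1)) * (n * (b + 2))
      + 3 * (catalan (m + 2) - catalan (m + 1)) * (n * (n - 1)))
      = 2 * (2 * m + 3)! := by
  have hC := catalan_mul_factorial_mul_factorial (m + 1)
  have hrec := succ_succ_mul_catalan_succ (m + 1)
  rw [show 2 * (m + 1) = 2 * m + 2 by ring, show m + 1 + 1 = m + 2 by ring, factorial_succ m] at hC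
  rw [show m + 1 + 1 = m + 2 by ring] at hrec
  rw [factorial_succ (2 * m + 2)]
  subst hb
  apply_fun (Nat.cast : ℕ → ℤ) at hC hrec
  push_cast at hC hrec ⊢
  linear_combination 2 * (2 * (m : ℤ) + 3) * hC - 2 * ((m + 2)! * (m ! : ℤ)) * n * hrec

theorem denominator_mul_brownQuotient (n m : ℕ) :
    (((m + 2)! * m ! * n ! * (3 * n + 2 * m + 3)! : ℕ) : ℤ) * brownQuotient n m
      = ((2 * (2 * m + 3)! * (4 * n + 2 * m + 1)! : ℕ) : ℤ) := by
  obtain ⟨b, hb⟩ : ∃ b, b = 3 * n + 2 * m + 1 := ⟨_, rfl⟩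
  have hweights := factorial_mul_factorial_mul_brown_catalan_combination hb
  rw [brownQuotient, show 4 * n + 2 * m + 1 = n + b by omega, show 3 * n + 2 * m + 1 = b by omega,
    show 3 * n + 2 * m + 2 = b + 1 by omega, show 3 * n + 2 * m + 3 = b + 2 by omega]
  have h0 := add_choose_add_mul_factorial_mul_factorial n b 0
  have h1 := add_choose_add_mul_factorial_mul_factorial n b 1
  have h2 := add_choose_add_mul_factorial_mul_factorial n b 2
  rw [add_zero, descFactorial_zero] at h0
  rw [descFactorial_one, factorial_succ b] at h1
  rw [factorial_succ (b + 1), factorial_succ b] at h2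
  rw [factorial_succ (b + 1), factorial_succ b]
  apply_fun (Nat.cast : ℕ → ℤ) at h0 h1 h2
  push_cast [cast_descFactorial_two] at h0 h1 h2 ⊢
  set P : ℤ := (m + 2)! * (m ! : ℤ)
  linear_combination
    P * catalan (m + 1) * (b + 1) * (b + 2) * h0
    - P * (catalan (m + 2) + 2 * catalan (m + 1)) * (b + 2) * h1
    + 3 * P * (catalan (m + 2) - catalan (m + 1)) * h2
    + ((n + b)! : ℤ) * hweights

/-- Brown's formula `A(n,m) = 2·(2m+3)!·(4n+2m+1)! / ((m+2)!·m!·n!·(3n+2m+3)!)`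
is a positive integer: the denominator divides the numerator. -/
theorem brown_formula_denominator_dvd
    (n m : ℕ) :
    (m + 2)! * m ! * n ! * (3 * n + 2 * m + 3)! ∣ 2 * (2 * m + 3)! * (4 * n + 2 * m + 1)! :=
  Int.natCast_dvd_natCast.mp ⟨brownQuotient n m, (denominator_mul_brownQuotient n m).symm⟩
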